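/- arXiv:1604.05227 — 5 statements merged into one kernel-verified Lean document; each statement's English description precedes it below -/
import Mathlib

section
/- Let U ⊆ ℝ² be open, I ⊆ ℝ an open time interval, g ∈ ℝ, and let h : I × U → ℝ, v : I × U → ℝ², b : U → ℝ, D : I × U → ℝ² be continuously differentiable with h(t,x) > 0 for all (t,x). Set η = h + b and q = h v. Then the momentum equation ∂_t(hv) + ∇·(hv ⊗ v) + g h ∇η + D = 0 holds at a point if and only if the pre-balanced momentum equation ∂_t q + ∇·( (q ⊗ q)/(η − b) + (1/2) g (η² − 2ηb) I₂ ) + D = − g η ∇b holds at that point, where I₂ is the 2×2 identity matrix. -/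
noncomputable section

abbrev E2 := EuclideanSpace ℝ (Fin 2)

/-- The `i`-th spatial partial derivative of a scalar function on `ℝ²`. -/
def pd (i : Fin 2) (f : E2 → ℝ) (x : E2) : ℝ := fderiv ℝ f x (EuclideanSpace.single i 1)

/-- The `i`-th component of the row-wise divergence of a (2×2)-matrix-valued field. -/
def divRow (M : E2 → Fin 2 → Fin 2 → ℝ) (i : Fin 2) (x : E2) : ℝ :=
  ∑ j, pd j (fun y => M y i j) x

/-- Outer product of two vectors of `ℝ²`. -/
def outer (a b : E2) : Fin 2 → Fin 2 → ℝ := fun i j => a i * b j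

/-! Writing `η = h + b`, the flux of the pre-balanced form is pointwise
`q ⊗ q / h + ½ g (h² − b²) I₂ = h v ⊗ v + ½ g (h² − b²) I₂`,
whose divergence differs from `∇·(h v ⊗ v)` by `∇(½ g (h² − b²)) = g h ∇h − g b ∇b = g h ∇η − g η ∇b`.
Moving `g η ∇b` across turns one equation into the other. -/

theorem ContDiffOn.differentiableAt_comp_prodMk {E F G : Type*}
    [NormedAddCommGroup E] [NormedSpace ℝ E] [NormedAddCommGroup F] [NormedSpace ℝ F]
    [NormedAddCommGroup G] [NormedSpace ℝ G] {n : WithTop ℕ∞} {f : E × F → G}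
    {s : Set E} {u : Set F} (hf : ContDiffOn ℝ n f (s ×ˢ u)) (hn : n ≠ 0)
    (hs : IsOpen s) (hu : IsOpen u) {t : E} (ht : t ∈ s) {x : F} (hx : x ∈ u) :
    DifferentiableAt ℝ (fun y => f (t, y)) x :=
  ((hf.contDiffAt ((hs.prod hu).mem_nhds ⟨ht, hx⟩)).differentiableAt hn).comp x
    ((differentiableAt_const t).prodMk differentiableAt_id)

section PartialDerivatives

variable {i : Fin 2} {f k : E2 → ℝ} {x : E2}

theorem pd_add (hf : DifferentiableAt ℝ f x) (hk : DifferentiableAt ℝ k x) :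
    pd i (fun y => f y + k y) x = pd i f x + pd i k x := by
  simp only [pd, fderiv_fun_add hf hk, add_apply]

theorem pd_sub (hf : DifferentiableAt ℝ f x) (hk : DifferentiableAt ℝ k x) :
    pd i (fun y => f y - k y) x = pd i f x - pd i k x := by
  simp only [pd, fderiv_fun_sub hf hk, sub_apply]

theorem pd_const_mul (c : ℝ) (hf : DifferentiableAt ℝ f x) :
    pd i (fun y => c * f y) x = c * pd i f x := by
  simp only [pd, fderiv_const_mul hf c, smul_apply, smul_eq_mul]

theorem pd_mul_self (hf : DifferentiableAt ℝ f x) :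
    pd i (fun y => f y * f y) x = 2 * f x * pd i f x := by
  simp only [pd, fderiv_fun_mul hf hf, add_apply, smul_apply, smul_eq_mul]
  ring

theorem pd_half_mul_sub_mul_self (g : ℝ) (hf : DifferentiableAt ℝ f x)
    (hk : DifferentiableAt ℝ k x) :
    pd i (fun y => 1 / 2 * g * (f y * f y - k y * k y)) x
      = g * f x * pd i f x - g * k x * pd i k x := by
  have hf2 : DifferentiableAt ℝ (fun y => f y * f y) x := hf.fun_mul hf
  have hk2 : DifferentiableAt ℝ (fun y => k y * k y) x := hk.fun_mul hk
  rw [pd_const_mul _ (hf2.fun_sub hk2), pd_sub hf2 hk2, pd_mul_self hf, pd_mul_self hk]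
  ring

theorem divRow_add_smul_one {M : E2 → Fin 2 → Fin 2 → ℝ}
    (hM : ∀ j, DifferentiableAt ℝ (fun y => M y i j) x) (hf : DifferentiableAt ℝ f x) :
    divRow (fun y i' j => M y i' j + f y * (if i' = j then 1 else 0)) i x
      = divRow M i x + pd i f x := by
  have hentry : ∀ j, pd j (fun y => M y i j + f y * (if i = j then 1 else 0)) x
      = pd j (fun y => M y i j) x + if i = j then pd j f x else 0 := by
    intro j
    by_cases hij : i = j
    · subst hij
      simp only [if_true, mul_one]
      exact pd_add (hM i) hf
    · simp only [hij, if_false, mul_zero, add_zero]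
  simp only [divRow, hentry, Finset.sum_add_distrib, Finset.sum_ite_eq, Finset.mem_univ,
    if_true]

end PartialDerivatives

/-- At `h = 0` both sides vanish, because `x / 0 = 0`. -/
theorem prebalanced_flux_entry (g h b a c δ : ℝ) :
    (h * a) * (h * c) / ((h + b) - b) + 1 / 2 * g * ((h + b) ^ 2 - 2 * (h + b) * b) * δ
      = h * a * c + 1 / 2 * g * (h * h - b * b) * δ := by
  rw [add_sub_cancel_right, mul_mul_mul_comm, mul_div_right_comm, mul_self_div_self]
  ring

theorem prebalanced_momentum_equivalence_general
    (I : Set ℝ) (hI : IsOpen I) (U : Set E2) (hU : IsOpen U) (g : ℝ)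
    (h : ℝ → E2 → ℝ) (v : ℝ → E2 → E2) (b : E2 → ℝ) (D : ℝ → E2 → E2)
    (h_smooth : ContDiffOn ℝ 1 (fun p : ℝ × E2 => h p.1 p.2) (I ×ˢ U))
    (v_smooth : ContDiffOn ℝ 1 (fun p : ℝ × E2 => fun i => v p.1 p.2 i) (I ×ˢ U))
    (b_smooth : ContDiffOn ℝ 1 b U)
    (η : ℝ → E2 → ℝ) (hη : ∀ t x, η t x = h t x + b x)
    (q : ℝ → E2 → E2) (hq : ∀ t x, q t x = h t x • v t x)
    (t : ℝ) (ht : t ∈ I) (x : E2) (hx : x ∈ U) :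
    (∀ i : Fin 2,
        deriv (fun s => q s x i) t
          + divRow (fun y => outer (h t y • v t y) (v t y)) i x
          + g * h t x * pd i (fun y => η t y) x
          + D t x i = 0)
      ↔ (∀ i : Fin 2,
        deriv (fun s => q s x i) t
          + divRow (fun y i' j =>
              q t y i' * q t y j / (η t y - b y)
                + (1 / 2 : ℝ) * g * ((η t y) ^ 2 - 2 * η t y * b y)
                  * (if i' = j then (1 : ℝ) else 0)) i x
          + D t x i
          = -(g * η t x * pd i b x)) := by
  have hd : DifferentiableAt ℝ (fun y => h t y) x :=
    h_smooth.differentiableAt_comp_prodMk one_ne_zero hI hU ht hx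
  have vd : ∀ j, DifferentiableAt ℝ (fun y => v t y j) x :=
    differentiableAt_pi.mp (v_smooth.differentiableAt_comp_prodMk one_ne_zero hI hU ht hx)
  have bd : DifferentiableAt ℝ b x :=
    (b_smooth.contDiffAt (hU.mem_nhds hx)).differentiableAt one_ne_zero
  have pd_η : ∀ i, pd i (fun y => η t y) x = pd i (fun y => h t y) x + pd i b x := fun i => by
    simp only [hη]
    exact pd_add hd bd
  have div_flux : ∀ i, divRow (fun y i' j =>
        q t y i' * q t y j / (η t y - b y)
          + (1 / 2 : ℝ) * g * ((η t y) ^ 2 - 2 * η t y * b y)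
            * (if i' = j then (1 : ℝ) else 0)) i x
      = divRow (fun y => outer (h t y • v t y) (v t y)) i x
        + (g * h t x * pd i (fun y => h t y) x - g * b x * pd i b x) := fun i => by
    simp only [hq, hη, PiLp.smul_apply, smul_eq_mul, prebalanced_flux_entry]
    rw [← pd_half_mul_sub_mul_self g hd bd]
    exact divRow_add_smul_one (fun j => by fun_prop) (by fun_prop)
  refine forall_congr' fun i => ?_
  rw [div_flux, pd_η, hη]
  constructor <;> intro H <;> linarith

/-- With `h > 0` continuously differentiable on `I × U`, `v, D`
continuously differentiable, `b` time-independent and continuously differentiable,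
`η = h + b`, `q = h v`, the momentum equation
`∂ₜ(hv) + ∇·(hv ⊗ v) + g h ∇η + D = 0`
holds at a point of `I × U` iff the pre-balanced momentum equation
`∂ₜ q + ∇·( q⊗q/(η−b) + (1/2) g (η² − 2ηb) I₂ ) + D = − g η ∇b`
holds at that point. -/
theorem prebalanced_momentum_equivalence
    (I : Set ℝ) (hI : IsOpen I) (U : Set E2) (hU : IsOpen U) (g : ℝ)
    (h : ℝ → E2 → ℝ) (v : ℝ → E2 → E2) (b : E2 → ℝ) (D : ℝ → E2 → E2)
    (h_smooth : ContDiffOn ℝ 1 (fun p : ℝ × E2 => h p.1 p.2) (I ×ˢ U))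
    (v_smooth : ContDiffOn ℝ 1 (fun p : ℝ × E2 => fun i => v p.1 p.2 i) (I ×ˢ U))
    (b_smooth : ContDiffOn ℝ 1 b U)
    (D_smooth : ContDiffOn ℝ 1 (fun p : ℝ × E2 => fun i => D p.1 p.2 i) (I ×ˢ U))
    (h_pos : ∀ t ∈ I, ∀ x ∈ U, 0 < h t x)
    (η : ℝ → E2 → ℝ) (hη : ∀ t x, η t x = h t x + b x)
    (q : ℝ → E2 → E2) (hq : ∀ t x, q t x = h t x • v t x)
    (t : ℝ) (ht : t ∈ I) (x : E2) (hx : x ∈ U) :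
    (∀ i : Fin 2,
        deriv (fun s => q s x i) t
          + divRow (fun y => outer (h t y • v t y) (v t y)) i x
          + g * h t x * pd i (fun y => η t y) x
          + D t x i = 0)
      ↔ (∀ i : Fin 2,
        deriv (fun s => q s x i) t
          + divRow (fun y i' j =>
              q t y i' * q t y j / (η t y - b y)
                + (1 / 2 : ℝ) * g * ((η t y) ^ 2 - 2 * η t y * b y)
                  * (if i' = j then (1 : ℝ) else 0)) i x
          + D t x i
          = -(g * η t x * pd i b x)) :=
  prebalanced_momentum_equivalence_general I hI U hU g h v b D h_smooth v_smooth b_smooth η hη q hq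
    t ht x hx
end
end

section
/- Suppose g ≥ 0, n ∈ ℝ² is a unit vector, h⁻ = η⁻ − b⁻ > 0 and the reconstructed interior height satisfies ȟ⁻ > 0. Then the local wave speed of the reconstructed interior state does not exceed that of the original interior state: |q̌⁻ · n| / ȟ⁻ + √(g ȟ⁻) ≤ |q⁻ · n| / h⁻ + √(g h⁻). -/
noncomputable section

open scoped RealInnerProductSpace

/-- `b* = max(b⁻, b⁺)`. -/
def bstar (bm bp : ℝ) : ℝ := max bm bp

/-- `ȟ⁻ = max(0, η⁻ − b*)`. -/
def hcheckm (ηm bm bp : ℝ) : ℝ := max 0 (ηm - bstar bm bp)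

/-- `q̌⁻ = (ȟ⁻/(η⁻ − b⁻)) q⁻`. -/
def qcheckm (ηm bm bp : ℝ) (qm : E2) : E2 := (hcheckm ηm bm bp / (ηm - bm)) • qm

/-!
The reconstruction rescales the discharge by the same factor `ȟ⁻ / h⁻` as the height, so the
normal velocity `q · n / h` is unchanged, while `ȟ⁻ ≤ h⁻` because `b* ≥ b⁻`; hence only the
celerity `√(g h)` can change, and it decreases.
-/

lemma inner_div_smul_div_cancel {F : Type*} [NormedAddCommGroup F] [InnerProductSpace ℝ F]
    {c : ℝ} (hc : c ≠ 0) (h : ℝ) (q n : F) :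
    ⟪(c / h) • q, n⟫ / c = ⟪q, n⟫ / h := by
  rw [real_inner_smul_left]
  field_simp

-- For `g < 0` both sides are `0`, as `Real.sqrt` vanishes on negative reals.
lemma Real.sqrt_mul_le_sqrt_mul_of_le (g : ℝ) {a b : ℝ} (ha : 0 ≤ a) (hab : a ≤ b) :
    √(g * a) ≤ √(g * b) := by
  rw [Real.sqrt_mul' g ha, Real.sqrt_mul' g (ha.trans hab)]
  exact mul_le_mul_of_nonneg_left (Real.sqrt_le_sqrt hab) (Real.sqrt_nonneg g)

lemma hcheckm_nonneg (ηm bm bp : ℝ) : 0 ≤ hcheckm ηm bm bp :=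
  le_max_left _ _

lemma hcheckm_le (ηm bm bp : ℝ) (h : 0 ≤ ηm - bm) : hcheckm ηm bm bp ≤ ηm - bm :=
  max_le h (by unfold bstar; linarith [le_max_left bm bp])

lemma abs_inner_qcheckm_div_hcheckm {ηm bm bp : ℝ} (qm n : E2)
    (hpos : 0 < ηm - bm) (hcpos : 0 < hcheckm ηm bm bp) :
    |⟪qcheckm ηm bm bp qm, n⟫| / hcheckm ηm bm bp = |⟪qm, n⟫| / (ηm - bm) := by
  rw [← abs_of_pos hcpos, ← abs_div, qcheckm, inner_div_smul_div_cancel hcpos.ne', abs_div,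
    abs_of_pos hpos]

theorem hydrostatic_reconstruction_wave_speed_general (g : ℝ)
    (n : E2) (ηm bm bp : ℝ) (qm : E2)
    (hpos : 0 < ηm - bm) (hcpos : 0 < hcheckm ηm bm bp) :
    |⟪qcheckm ηm bm bp qm, n⟫| / hcheckm ηm bm bp + Real.sqrt (g * hcheckm ηm bm bp)
      ≤ |⟪qm, n⟫| / (ηm - bm) + Real.sqrt (g * (ηm - bm)) := by
  rw [abs_inner_qcheckm_div_hcheckm qm n hpos hcpos]
  gcongr 1
  exact Real.sqrt_mul_le_sqrt_mul_of_le g (hcheckm_nonneg ηm bm bp) (hcheckm_le ηm bm bp hpos.le)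

/-- With `g ≥ 0`, `n` a unit vector, `h⁻ = η⁻ − b⁻ > 0` and `ȟ⁻ > 0`,
the local wave speed of the reconstructed interior state does not exceed that of the
original interior state:
`|q̌⁻·n|/ȟ⁻ + √(g ȟ⁻) ≤ |q⁻·n|/h⁻ + √(g h⁻)`. -/
theorem hydrostatic_reconstruction_wave_speed (g : ℝ) (hg : 0 ≤ g)
    (n : E2) (hn : ‖n‖ = 1) (ηm bm bp : ℝ) (qm : E2)
    (hpos : 0 < ηm - bm) (hcpos : 0 < hcheckm ηm bm bp) :
    |⟪qcheckm ηm bm bp qm, n⟫| / hcheckm ηm bm bp + Real.sqrt (g * hcheckm ηm bm bp)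
      ≤ |⟪qm, n⟫| / (ηm - bm) + Real.sqrt (g * (ηm - bm)) :=
  hydrostatic_reconstruction_wave_speed_general g n ηm bm bp qm hpos hcpos
end
end

section
/- Let g ∈ ℝ, let n ∈ ℝ² be a unit vector, let a ∈ ℝ be arbitrary, and consider an interface at rest: η⁻ = η⁺ = η^e ∈ ℝ and q⁻ = q⁺ = 0 ∈ ℝ², with bottom values b⁻, b⁺ ∈ ℝ. Apply the hydrostatic reconstruction, set W̌⁻ = (η̌⁻, q̌⁻) and W̌⁺ = (η̌⁺, q̌⁺). Then the modified numerical flux equals the exact interior normal flux: 𝔽_h(W̌⁻, W̌⁺, b̌, b̌, n) + ( 0 , g η̌⁻ (b̌ − b⁻) n ) = 𝔽((η^e, 0), b⁻)·n. -/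
/-! Hydrostatic reconstruction preserves the free surface, `η̌ = η`, and turns zero discharge into
zero discharge; the Lax–Friedrichs flux of two equal states is their physical flux, so the
reconstructed flux is `𝔽((η, 0), b̌)·n`, and the source correction `g η (b̌ − b⁻) n` shifts the
bottom in the pressure term `½ g (η² − 2ηb)` from `b̌` back to `b⁻`. -/

noncomputable section

open scoped RealInnerProductSpace

/-- `b̌ = b* − max(0, b* − η⁻)`. -/
def bcheck (ηm bm bp : ℝ) : ℝ := bstar bm bp - max 0 (bstar bm bp - ηm)

/-- `ȟ⁺ = max(0, η⁺ − b*)`. -/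
def hcheckp (ηm ηp bm bp : ℝ) : ℝ := max 0 (ηp - bstar bm bp)

/-- `η̌⁻ = ȟ⁻ + b̌`. -/
def etacheckm (ηm bm bp : ℝ) : ℝ := hcheckm ηm bm bp + bcheck ηm bm bp

/-- `η̌⁺ = ȟ⁺ + b̌`. -/
def etacheckp (ηm ηp bm bp : ℝ) : ℝ := hcheckp ηm ηp bm bp + bcheck ηm bm bp

/-- `q̌⁺ = (ȟ⁺/(η⁺ − b⁺)) q⁺`. -/
def qcheckp (ηm ηp bm bp : ℝ) (qp : E2) : E2 := (hcheckp ηm ηp bm bp / (ηp - bp)) • qp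

/-- The pre-balanced normal flux `𝔽(W, b)·n` for `W = (η, q)`:
`( q·n , ((q·n)/(η − b)) q + (1/2) g (η² − 2ηb) n )`. -/
def Fflux (g : ℝ) (W : ℝ × E2) (b : ℝ) (n : E2) : ℝ × E2 :=
  (⟪W.2, n⟫, (⟪W.2, n⟫ / (W.1 - b)) • W.2 + ((1 / 2 : ℝ) * g * (W.1 ^ 2 - 2 * W.1 * b)) • n)

/-- The global Lax–Friedrichs flux with speed `a`:
`𝔽_h(W⁻, W⁺, b⁻, b⁺, n) = (1/2)( 𝔽(W⁻,b⁻)·n + 𝔽(W⁺,b⁺)·n − a (W⁺ − W⁻) )`. -/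
def LFflux (g a : ℝ) (Wm Wp : ℝ × E2) (bm bp : ℝ) (n : E2) : ℝ × E2 :=
  (1 / 2 : ℝ) • (Fflux g Wm bm n + Fflux g Wp bp n - a • (Wp - Wm))

theorem etacheckm_eq_self (η bm bp : ℝ) : etacheckm η bm bp = η := by
  have h := max_zero_sub_max_neg_zero_eq_self (η - bstar bm bp)
  rw [neg_sub, max_comm _ 0, max_comm _ 0] at h
  unfold etacheckm hcheckm bcheck
  linarith

theorem etacheckp_self_eq_self (η bm bp : ℝ) : etacheckp η η bm bp = η :=
  etacheckm_eq_self η bm bp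

@[simp]
theorem qcheckm_zero (ηm bm bp : ℝ) : qcheckm ηm bm bp 0 = 0 :=
  smul_zero _

@[simp]
theorem qcheckp_zero (ηm ηp bm bp : ℝ) : qcheckp ηm ηp bm bp 0 = 0 :=
  smul_zero _

theorem LFflux_self (g a : ℝ) (W : ℝ × E2) (b : ℝ) (n : E2) :
    LFflux g a W W b b n = Fflux g W b n := by
  rw [LFflux, sub_self, smul_zero, sub_zero, ← two_smul ℝ, smul_smul]
  norm_num

theorem Fflux_at_rest (g η b : ℝ) (n : E2) :
    Fflux g (η, 0) b n = (0, ((1 / 2 : ℝ) * g * (η ^ 2 - 2 * η * b)) • n) := by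
  simp [Fflux]

theorem Fflux_at_rest_add_source (g η b b' : ℝ) (n : E2) :
    Fflux g (η, 0) b' n + ((0 : ℝ), (g * η * (b' - b)) • n) = Fflux g (η, 0) b n := by
  rw [Fflux_at_rest, Fflux_at_rest, Prod.mk_add_mk, add_zero, ← add_smul]
  congr 2
  ring

theorem well_balanced_flux_at_rest_general (g a ηe bm bp : ℝ) (n : E2) :
    LFflux g a
        (etacheckm ηe bm bp, qcheckm ηe bm bp (0 : E2))
        (etacheckp ηe ηe bm bp, qcheckp ηe ηe bm bp (0 : E2))
        (bcheck ηe bm bp) (bcheck ηe bm bp) n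
      + ((0 : ℝ), (g * etacheckm ηe bm bp * (bcheck ηe bm bp - bm)) • n)
      = Fflux g (ηe, (0 : E2)) bm n := by
  rw [etacheckp_self_eq_self, etacheckm_eq_self, qcheckm_zero, qcheckp_zero, LFflux_self]
  exact Fflux_at_rest_add_source g ηe bm _ n

/-- At an interface at rest (`η⁻ = η⁺ = η^e`, `q⁻ = q⁺ = 0`), for any
gravity `g`, unit normal `n` and wave speed `a`, the modified numerical flux equals the
exact interior normal flux:
`𝔽_h(W̌⁻, W̌⁺, b̌, b̌, n) + (0, g η̌⁻ (b̌ − b⁻) n) = 𝔽((η^e, 0), b⁻)·n`. -/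
theorem well_balanced_flux_at_rest (g a ηe bm bp : ℝ) (n : E2) (hn : ‖n‖ = 1) :
    LFflux g a
        (etacheckm ηe bm bp, qcheckm ηe bm bp (0 : E2))
        (etacheckp ηe ηe bm bp, qcheckp ηe ηe bm bp (0 : E2))
        (bcheck ηe bm bp) (bcheck ηe bm bp) n
      + ((0 : ℝ), (g * etacheckm ηe bm bp * (bcheck ηe bm bp - bm)) • n)
      = Fflux g (ηe, (0 : E2)) bm n :=
  well_balanced_flux_at_rest_general g a ηe bm bp n
end
end

section
/- Let T ⊆ ℝ² be measurable with 0 < μ(T) < ∞ for the Lebesgue measure μ, let h : T → ℝ be integrable with cell average h̄ = μ(T)⁻¹ ∫_T h dμ ≥ 0, let S ⊆ T be a finite nonempty set and m = min_{x∈S} h(x). Define θ = min( h̄/(h̄ − m), 1 ) if m < h̄ and θ = 1 otherwise, and set ĥ(x) = θ (h(x) − h̄) + h̄. Then 0 ≤ θ ≤ 1, the limited function has the same cell average, μ(T)⁻¹ ∫_T ĥ dμ = h̄, and ĥ(x) ≥ 0 for every x ∈ S. -/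
noncomputable section

open MeasureTheory

/-- The scaling factor `θ` of the limiter, for cell average `a` and minimum `m` over the
quadrature points. -/
def zhangShuTheta (a m : ℝ) : ℝ := if m < a then min (a / (a - m)) 1 else 1

theorem zhangShuTheta_nonneg {a : ℝ} (ha : 0 ≤ a) (m : ℝ) : 0 ≤ zhangShuTheta a m := by
  unfold zhangShuTheta
  split_ifs with hma
  · exact le_min (div_nonneg ha (sub_nonneg.2 hma.le)) zero_le_one
  · exact zero_le_one

theorem zhangShuTheta_le_one (a m : ℝ) : zhangShuTheta a m ≤ 1 := by
  unfold zhangShuTheta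
  split_ifs
  · exact min_le_right _ _
  · exact le_rfl

theorem zhangShuTheta_mul_sub_add_nonneg {a m y : ℝ} (ha : 0 ≤ a) (hmy : m ≤ y) :
    0 ≤ zhangShuTheta a m * (y - a) + a := by
  have hθ₀ := zhangShuTheta_nonneg ha m
  rcases le_or_gt a y with hay | hya
  · linarith [mul_nonneg hθ₀ (sub_nonneg.2 hay)]
  have hma : 0 < a - m := by linarith
  have hθ : zhangShuTheta a m ≤ a / (a - m) := by
    rw [zhangShuTheta, if_pos (sub_pos.1 hma)]
    exact min_le_left _ _
  have hundershoot : zhangShuTheta a m * (a - y) ≤ a :=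
    calc zhangShuTheta a m * (a - y) ≤ zhangShuTheta a m * (a - m) :=
          mul_le_mul_of_nonneg_left (by linarith) hθ₀
      _ ≤ a / (a - m) * (a - m) := mul_le_mul_of_nonneg_right hθ hma.le
      _ = a := div_mul_cancel₀ _ hma.ne'
  linarith

theorem setIntegral_mul_sub_setAverage_add_setAverage {α : Type*} [MeasurableSpace α]
    {μ : Measure α} {s : Set α} {f : α → ℝ} (hs : μ s ≠ ⊤) (hf : IntegrableOn f s μ) (θ : ℝ) :
    ∫ x in s, θ * (f x - ⨍ y in s, f y ∂μ) + ⨍ y in s, f y ∂μ ∂μ = ∫ x in s, f x ∂μ := by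
  have hconst : IntegrableOn (fun _ => ⨍ y in s, f y ∂μ) s μ := integrableOn_const hs
  have hmean : ∫ x in s, f x - ⨍ y in s, f y ∂μ ∂μ = 0 := setAverage_sub_setAverage hs f
  rw [integral_sub hf hconst, sub_eq_zero] at hmean
  have hdev : IntegrableOn (fun x => θ * (f x - ⨍ y in s, f y ∂μ)) s μ :=
    (hf.sub hconst).const_mul θ
  rw [integral_add hdev hconst, integral_const_mul,
    setAverage_sub_setAverage hs f, mul_zero, zero_add, hmean]

theorem zhang_shu_limiter_general (T : Set E2)
    (hTfin : volume T < ⊤)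
    (h : E2 → ℝ) (hInt : IntegrableOn h T volume)
    (hbar : ℝ) (hbar_def : hbar = (volume T).toReal⁻¹ * ∫ x in T, h x)
    (hbar_nonneg : 0 ≤ hbar)
    (S : Finset E2) (hS : S.Nonempty)
    (m : ℝ) (hm : m = S.inf' hS h)
    (θ : ℝ) (hθ : θ = if m < hbar then min (hbar / (hbar - m)) 1 else 1)
    (hHat : E2 → ℝ) (hhHat : hHat = fun x => θ * (h x - hbar) + hbar) :
    0 ≤ θ ∧ θ ≤ 1
      ∧ (volume T).toReal⁻¹ * ∫ x in T, hHat x = hbar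
      ∧ ∀ x ∈ S, 0 ≤ hHat x := by
  have hθ : θ = zhangShuTheta hbar m := hθ
  have hbar_average : hbar = ⨍ x in T, h x := by
    rw [hbar_def, setAverage_eq, smul_eq_mul, measureReal_def]
  subst hθ hhHat
  refine ⟨zhangShuTheta_nonneg hbar_nonneg m, zhangShuTheta_le_one hbar m, ?_, ?_⟩
  · rw [hbar_average, setIntegral_mul_sub_setAverage_add_setAverage hTfin.ne hInt,
      setAverage_eq, smul_eq_mul, measureReal_def]
  · intro x hx
    exact zhangShuTheta_mul_sub_add_nonneg hbar_nonneg (hm ▸ S.inf'_le h hx)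

/-- The conservative linear scaling limiter of Zhang and Shu:
`0 ≤ θ ≤ 1`, the limited function `hHat = θ(h − h̄) + h̄` has the same cell average on `T`,
and `hHat ≥ 0` at every point of the finite set `S`. -/
theorem zhang_shu_limiter (T : Set E2) (hT : MeasurableSet T)
    (hT0 : 0 < volume T) (hTfin : volume T < ⊤)
    (h : E2 → ℝ) (hInt : IntegrableOn h T volume)
    (hbar : ℝ) (hbar_def : hbar = (volume T).toReal⁻¹ * ∫ x in T, h x)
    (hbar_nonneg : 0 ≤ hbar)
    (S : Finset E2) (hS : S.Nonempty) (hST : ↑S ⊆ T)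
    (m : ℝ) (hm : m = S.inf' hS h)
    (θ : ℝ) (hθ : θ = if m < hbar then min (hbar / (hbar - m)) 1 else 1)
    (hHat : E2 → ℝ) (hhHat : hHat = fun x => θ * (h x - hbar) + hbar) :
    0 ≤ θ ∧ θ ≤ 1
      ∧ (volume T).toReal⁻¹ * ∫ x in T, hHat x = hbar
      ∧ ∀ x ∈ S, 0 ≤ hHat x :=
  zhang_shu_limiter_general T hTfin h hInt hbar hbar_def hbar_nonneg S hS m hm θ hθ hHat hhHat
end
end

section
/- Let g > 0, h₀ > 0 and ε > 0, and set c = √(g h₀ (1+ε)) and κ = √( 3ε / (4 h₀² (1+ε)) ). Define h(t,x) = h₀ + ε h₀ sech²(κ (x − c t)) and u(t,x) = c (1 − h₀ / h(t,x)) for (t,x) ∈ ℝ², and let M = ∂_t u + u ∂_x u denote the material derivative of u. Then the one-dimensional flat-bottom Green–Naghdi (Serre) momentum equation holds at every point of ℝ²: M − (1/(3h)) ∂_x( h³ ∂_x M ) + g ∂_x h + (2/(3h)) ∂_x( h³ (∂_x u)² ) = 0. -/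
/-!
The wave travels at speed `c`, so `h`, `u` and `M` are functions of `ξ = x - c t` and, the
equation being invariant under translations in `x`, it reduces to an ODE for the profile `H`.
Since `u = c (1 - h₀ / h)`, the relative mass flux `h (u - c) = -c h₀` is constant; this
expresses `M` and every term through `H, H', H'', H'''`, and after multiplication by `H³` the
equation reads `(g H³ - c² h₀²) H' + (c² h₀² / 3) (H² H''' - 2 H H' H'' + H'³) = 0`.
For `H = h₀ (1 + ε sech² (κ ξ))` this is a polynomial identity in `v = sech²` and `T = tanh`
modulo `T² = 1 - v`, which holds thanks to `c² = g h₀ (1 + ε)` and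
`4 h₀² (1 + ε) κ² = 3 ε`.
-/

noncomputable section

def sech (y : ℝ) : ℝ := 1 / Real.cosh y

open Real

lemma tanh_sq_eq_one_sub_sech_sq (y : ℝ) : tanh y ^ 2 = 1 - sech y ^ 2 := by
  have hcosh : cosh y ≠ 0 := (cosh_pos y).ne'
  rw [tanh_eq_sinh_div_cosh, sech]
  field_simp
  linear_combination -cosh_sq_sub_sinh_sq y

lemma hasDerivAt_sech_sq (y : ℝ) :
    HasDerivAt (fun z => sech z ^ 2) (-2 * sech y ^ 2 * tanh y) y := by
  have hcosh : cosh y ≠ 0 := (cosh_pos y).ne'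
  refine (((hasDerivAt_const y 1).fun_div (hasDerivAt_cosh y) hcosh).fun_pow 2).congr_deriv ?_
  rw [sech, tanh_eq_sinh_div_cosh]
  norm_num
  field_simp

lemma hasDerivAt_tanh (y : ℝ) : HasDerivAt tanh (sech y ^ 2) y := by
  have hcosh : cosh y ≠ 0 := (cosh_pos y).ne'
  have h := (hasDerivAt_sinh y).div (hasDerivAt_cosh y) hcosh
  rw [show sinh / cosh = tanh from funext fun z => (tanh_eq_sinh_div_cosh z).symm] at h
  refine h.congr_deriv ?_
  rw [sech]
  field_simp
  linear_combination cosh_sq_sub_sinh_sq y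

lemma hasDerivAt_sech_sq_mul_tanh (y : ℝ) :
    HasDerivAt (fun z => sech z ^ 2 * tanh z) (sech y ^ 2 * (3 * sech y ^ 2 - 2)) y := by
  refine ((hasDerivAt_sech_sq y).fun_mul (hasDerivAt_tanh y)).congr_deriv ?_
  linear_combination -2 * sech y ^ 2 * tanh_sq_eq_one_sub_sech_sq y

lemma hasDerivAt_sech_sq_mul_three_sech_sq_sub_two (y : ℝ) :
    HasDerivAt (fun z => sech z ^ 2 * (3 * sech z ^ 2 - 2))
      (-4 * sech y ^ 2 * tanh y * (3 * sech y ^ 2 - 1)) y := by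
  have h := hasDerivAt_sech_sq y
  refine (h.fun_mul ((h.const_mul 3).sub_const 2)).congr_deriv ?_
  ring

lemma hasDerivAt_comp_const_mul {f : ℝ → ℝ} {f' : ℝ} (κ ξ : ℝ) (hf : HasDerivAt f f' (κ * ξ)) :
    HasDerivAt (fun η => f (κ * η)) (κ * f') ξ := by
  have h : HasDerivAt (fun η => f (κ * η)) (f' * (κ * 1)) ξ :=
    hf.comp ξ ((hasDerivAt_id ξ).const_mul κ)
  exact h.congr_deriv (by ring)

/-- The left-hand side of the Green–Naghdi momentum equation at a fixed time, where `M` stands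
for the material derivative `∂ₜ u + u ∂ₓ u`. -/
def greenNaghdiResidual (g : ℝ) (h u M : ℝ → ℝ) (x : ℝ) : ℝ :=
  M x - (1 / (3 * h x)) * deriv (fun y => h y ^ 3 * deriv M y) x + g * deriv h x
    + (2 / (3 * h x)) * deriv (fun y => h y ^ 3 * deriv u y ^ 2) x

lemma greenNaghdiResidual_comp_sub_const (g a : ℝ) (h u M : ℝ → ℝ) (x : ℝ) :
    greenNaghdiResidual g (fun y => h (y - a)) (fun y => u (y - a)) (fun y => M (y - a)) x
      = greenNaghdiResidual g h u M (x - a) := by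
  simp only [greenNaghdiResidual, deriv_comp_sub_const,
    deriv_comp_sub_const (f := fun y => h y ^ 3 * deriv M y),
    deriv_comp_sub_const (f := fun y => h y ^ 3 * deriv u y ^ 2)]

def travelingMaterialDeriv (c : ℝ) (U : ℝ → ℝ) (ξ : ℝ) : ℝ := (U ξ - c) * deriv U ξ

lemma materialDeriv_travelingWave {U : ℝ → ℝ} (c t x : ℝ)
    (hU : DifferentiableAt ℝ U (x - c * t)) :
    deriv (fun s => U (x - c * s)) t + U (x - c * t) * deriv (fun y => U (y - c * t)) x
      = travelingMaterialDeriv c U (x - c * t) := by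
  have ht : HasDerivAt (fun s => x - c * s) (-c) t := by
    simpa using ((hasDerivAt_id t).const_mul c).const_sub x
  have hUt : HasDerivAt (fun s => U (x - c * s)) (deriv U (x - c * t) * -c) t :=
    hU.hasDerivAt.comp t ht
  rw [hUt.deriv, deriv_comp_sub_const, travelingMaterialDeriv]
  ring

section ConstantFlux

/-! The profile velocity `U = c (1 - h₀ / H)` is the one for which `H (U - c) = -c h₀`. -/

variable {c h₀ : ℝ} {H H₁ H₂ U : ℝ → ℝ}

lemma hasDerivAt_velocity_of_constant_flux (hH : ∀ η, HasDerivAt H (H₁ η) η)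
    (hne : ∀ η, H η ≠ 0) (hU : ∀ η, U η = c * (1 - h₀ / H η)) (η : ℝ) :
    HasDerivAt U (c * h₀ * H₁ η / H η ^ 2) η := by
  rw [funext hU]
  refine ((((hasDerivAt_const η h₀).fun_div (hH η) (hne η)).const_sub 1).const_mul
    c).congr_deriv ?_
  field_simp
  ring

lemma travelingMaterialDeriv_of_constant_flux (hH : ∀ η, HasDerivAt H (H₁ η) η)
    (hne : ∀ η, H η ≠ 0) (hU : ∀ η, U η = c * (1 - h₀ / H η)) :
    travelingMaterialDeriv c U = fun η => -(c * h₀) ^ 2 * H₁ η / H η ^ 3 := by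
  funext η
  have := hne η
  rw [travelingMaterialDeriv, (hasDerivAt_velocity_of_constant_flux hH hne hU η).deriv, hU]
  field_simp
  ring

theorem pow_three_mul_greenNaghdiResidual_of_constant_flux (g : ℝ) {ξ H₃ : ℝ}
    (hH : ∀ η, HasDerivAt H (H₁ η) η) (hH₁ : ∀ η, HasDerivAt H₁ (H₂ η) η)
    (hH₂ : HasDerivAt H₂ H₃ ξ) (hne : ∀ η, H η ≠ 0) (hU : ∀ η, U η = c * (1 - h₀ / H η)) :
    H ξ ^ 3 * greenNaghdiResidual g H U (travelingMaterialDeriv c U) ξ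
      = (g * H ξ ^ 3 - (c * h₀) ^ 2) * H₁ ξ
        + (c * h₀) ^ 2 / 3 * (H ξ ^ 2 * H₃ - 2 * H ξ * H₁ ξ * H₂ ξ + H₁ ξ ^ 3) := by
  have hM' (η : ℝ) : HasDerivAt (fun η => -(c * h₀) ^ 2 * H₁ η / H η ^ 3)
      (-(c * h₀) ^ 2 * (H₂ η * H η - 3 * H₁ η ^ 2) / H η ^ 4) η := by
    have := hne η
    refine (((hH₁ η).const_mul _).fun_div ((hH η).fun_pow 3) (pow_ne_zero 3 this)).congr_deriv ?_
    field_simp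
    ring
  have hDispersive : (fun η => H η ^ 3 * deriv (travelingMaterialDeriv c U) η)
      = fun η => -(c * h₀) ^ 2 * (H₂ η - 3 * H₁ η ^ 2 / H η) := by
    funext η
    have := hne η
    rw [travelingMaterialDeriv_of_constant_flux hH hne hU, (hM' η).deriv]
    field_simp
  have hDispersive' : HasDerivAt (fun η => -(c * h₀) ^ 2 * (H₂ η - 3 * H₁ η ^ 2 / H η))
      (-(c * h₀) ^ 2 * (H₃ - 6 * H₁ ξ * H₂ ξ / H ξ + 3 * H₁ ξ ^ 3 / H ξ ^ 2)) ξ := by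
    have := hne ξ
    refine ((hH₂.fun_sub ((((hH₁ ξ).fun_pow 2).const_mul 3).fun_div (hH ξ) this)).const_mul
      _).congr_deriv ?_
    field_simp
    ring
  have hQuadratic : (fun η => H η ^ 3 * deriv U η ^ 2)
      = fun η => (c * h₀) ^ 2 * H₁ η ^ 2 / H η := by
    funext η
    have := hne η
    rw [(hasDerivAt_velocity_of_constant_flux hH hne hU η).deriv]
    field_simp
  have hQuadratic' : HasDerivAt (fun η => (c * h₀) ^ 2 * H₁ η ^ 2 / H η)
      ((c * h₀) ^ 2 * (2 * H₁ ξ * H₂ ξ / H ξ - H₁ ξ ^ 3 / H ξ ^ 2)) ξ := by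
    have := hne ξ
    refine ((((hH₁ ξ).fun_pow 2).const_mul _).fun_div (hH ξ) this).congr_deriv ?_
    field_simp
    ring
  have := hne ξ
  rw [greenNaghdiResidual, hDispersive, hQuadratic, hDispersive'.deriv, hQuadratic'.deriv,
    (hH ξ).deriv, travelingMaterialDeriv_of_constant_flux hH hne hU]
  field_simp
  ring

end ConstantFlux

def solitaryDepth (h₀ ε κ ξ : ℝ) : ℝ := h₀ + ε * h₀ * sech (κ * ξ) ^ 2

section SolitaryDepth

variable (h₀ ε κ : ℝ)

lemma solitaryDepth_pos (hh₀ : 0 < h₀) (hε : 0 ≤ ε) (ξ : ℝ) : 0 < solitaryDepth h₀ ε κ ξ := by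
  unfold solitaryDepth
  positivity

lemma hasDerivAt_solitaryDepth (ξ : ℝ) :
    HasDerivAt (solitaryDepth h₀ ε κ)
      (-2 * ε * h₀ * κ * (sech (κ * ξ) ^ 2 * tanh (κ * ξ))) ξ := by
  refine (((hasDerivAt_comp_const_mul κ ξ (hasDerivAt_sech_sq (κ * ξ))).const_mul
    (ε * h₀)).const_add h₀).congr_deriv ?_
  ring

lemma hasDerivAt_solitaryDepth_deriv (ξ : ℝ) :
    HasDerivAt (fun η => -2 * ε * h₀ * κ * (sech (κ * η) ^ 2 * tanh (κ * η)))
      (-2 * ε * h₀ * κ ^ 2 * (sech (κ * ξ) ^ 2 * (3 * sech (κ * ξ) ^ 2 - 2))) ξ := by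
  refine ((hasDerivAt_comp_const_mul κ ξ (hasDerivAt_sech_sq_mul_tanh (κ * ξ))).const_mul
    (-2 * ε * h₀ * κ)).congr_deriv ?_
  ring

lemma hasDerivAt_solitaryDepth_deriv_deriv (ξ : ℝ) :
    HasDerivAt (fun η => -2 * ε * h₀ * κ ^ 2 * (sech (κ * η) ^ 2 * (3 * sech (κ * η) ^ 2 - 2)))
      (8 * ε * h₀ * κ ^ 3 * (sech (κ * ξ) ^ 2 * tanh (κ * ξ) * (3 * sech (κ * ξ) ^ 2 - 1))) ξ := by
  refine ((hasDerivAt_comp_const_mul κ ξ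
    (hasDerivAt_sech_sq_mul_three_sech_sq_sub_two (κ * ξ))).const_mul
    (-2 * ε * h₀ * κ ^ 2)).congr_deriv ?_
  ring

end SolitaryDepth

/-- Modulo `T² = 1 - v` the left side is `2 h₀ κ v T` times
`-ε (g h₀³ D³ - c² h₀²) + (4/3) c² h₀⁴ κ² (D³ - (1 + ε))` with `D = 1 + ε v`, and the two
relations turn `(4/3) c² h₀⁴ κ²` into `ε g h₀³` and `c² h₀²` into `g h₀³ (1 + ε)`. -/
lemma solitaryDepth_profile_identity {g h₀ ε κ c v T : ℝ} (hc : c ^ 2 = g * h₀ * (1 + ε))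
    (hκ : 4 * h₀ ^ 2 * (1 + ε) * κ ^ 2 = 3 * ε) (hT : T ^ 2 = 1 - v) :
    (g * (h₀ + ε * h₀ * v) ^ 3 - (c * h₀) ^ 2) * (-2 * ε * h₀ * κ * (v * T))
      + (c * h₀) ^ 2 / 3 * ((h₀ + ε * h₀ * v) ^ 2 * (8 * ε * h₀ * κ ^ 3 * (v * T * (3 * v - 1)))
        - 2 * (h₀ + ε * h₀ * v) * (-2 * ε * h₀ * κ * (v * T))
          * (-2 * ε * h₀ * κ ^ 2 * (v * (3 * v - 2)))
        + (-2 * ε * h₀ * κ * (v * T)) ^ 3) = 0 := by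
  linear_combination (-(8 / 3) * c ^ 2 * h₀ ^ 5 * ε ^ 3 * κ ^ 3 * v ^ 3 * T) * hT
    + (2 * h₀ * κ * v * T * (ε * h₀ ^ 2 + 4 / 3 * h₀ ^ 4 * κ ^ 2 * ((1 + ε * v) ^ 3 - (1 + ε)))) * hc
    + (2 * h₀ * κ * v * T * (g * h₀ ^ 3 / 3 * ((1 + ε * v) ^ 3 - (1 + ε)))) * hκ

/-- The solitary wave profile
`h(t,x) = h₀ + ε h₀ sech²(κ(x − ct))`, `u(t,x) = c(1 − h₀/h(t,x))` with
`c = √(g h₀ (1+ε))` and `κ = √(3ε/(4h₀²(1+ε)))` satisfies the one-dimensional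
flat-bottom Green–Naghdi (Serre) momentum equation at every point of `ℝ²`:
`M − (1/(3h)) ∂ₓ(h³ ∂ₓ M) + g ∂ₓ h + (2/(3h)) ∂ₓ(h³ (∂ₓ u)²) = 0`, where
`M = ∂ₜ u + u ∂ₓ u` is the material derivative of `u`. -/
theorem solitary_wave_GN_momentum (g h₀ ε : ℝ) (hg : 0 < g) (hh₀ : 0 < h₀)
    (hε : 0 < ε) (c κ : ℝ)
    (hc : c = Real.sqrt (g * h₀ * (1 + ε)))
    (hκ : κ = Real.sqrt (3 * ε / (4 * h₀ ^ 2 * (1 + ε))))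
    (h u : ℝ → ℝ → ℝ)
    (hh : h = fun t x => h₀ + ε * h₀ * (sech (κ * (x - c * t))) ^ 2)
    (hu : u = fun t x => c * (1 - h₀ / h t x))
    (M : ℝ → ℝ → ℝ)
    (hM : M = fun t x => deriv (fun s => u s x) t + u t x * deriv (fun y => u t y) x) :
    ∀ t x : ℝ,
      M t x
        - (1 / (3 * h t x)) * deriv (fun y => (h t y) ^ 3 * deriv (fun z => M t z) y) x
        + g * deriv (fun y => h t y) x
        + (2 / (3 * h t x)) * deriv (fun y => (h t y) ^ 3 * (deriv (fun z => u t z) y) ^ 2) x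
      = 0 := by
  intro t x
  have hc2 : c ^ 2 = g * h₀ * (1 + ε) := hc ▸ Real.sq_sqrt (by positivity)
  have hκ2 : 4 * h₀ ^ 2 * (1 + ε) * κ ^ 2 = 3 * ε := by
    rw [hκ, Real.sq_sqrt (by positivity)]
    field_simp
  set H := solitaryDepth h₀ ε κ
  set U := fun ξ => c * (1 - h₀ / H ξ)
  have hne (ξ : ℝ) : H ξ ≠ 0 := (solitaryDepth_pos h₀ ε κ hh₀ hε.le ξ).ne'
  have hMt : M t = fun y => travelingMaterialDeriv c U (y - c * t) := by
    funext y
    subst hM hu hh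
    exact materialDeriv_travelingWave c t y (hasDerivAt_velocity_of_constant_flux
      (hasDerivAt_solitaryDepth h₀ ε κ) hne (U := U) (fun _ => rfl) _).differentiableAt
  subst hh hu
  show greenNaghdiResidual g (fun y => H (y - c * t)) (fun y => U (y - c * t)) (M t) x = 0
  rw [hMt, greenNaghdiResidual_comp_sub_const]
  have hcubed := pow_three_mul_greenNaghdiResidual_of_constant_flux g
    (hasDerivAt_solitaryDepth h₀ ε κ) (hasDerivAt_solitaryDepth_deriv h₀ ε κ)
    (hasDerivAt_solitaryDepth_deriv_deriv h₀ ε κ (x - c * t)) hne (U := U) (fun _ => rfl)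
  exact (mul_eq_zero.mp (hcubed.trans (solitaryDepth_profile_identity hc2 hκ2
    (tanh_sq_eq_one_sub_sech_sq _)))).resolve_left (pow_ne_zero 3 (hne _))

end
end
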